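/- arXiv:1708.07064 — 3 statements merged into one kernel-verified Lean document; each statement's English description precedes it below -/
import Mathlib

section
/- Let α > 1 and β > 0 satisfy β² < 2√α − 1. Define h(x) = 2√α·x − x^{3/2} − β²/√x for x ∈ (0,1] and g(x) = (√α − √x)²/(β² − x²) for x ∈ (0, 1 ∧ β). Then: (i) h is strictly increasing on (0,1] with inf_{x∈(0,1]} h'(x) ≥ 2√α − 3/2 > 0; (ii) there exists a unique x* ∈ (0, 1 ∧ β) with h(x*) = 0, and g is decreasing on (0, x*) and increasing on (x*, 1 ∧ β); (iii) x* satisfies β^{4/3}/(2^{2/3}α^{1/3}) < x* < β^{4/3}/(2^{2/3}α^{1/3}) + β²/(2√α·(2√α − 3/2)). -/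
/-!
With `a = √α`, `h'(x) = 2a - (3/2)√x + β²/(2x√x) > 2a - 3/2 > 0` on `(0, 1]`, and
`g' = (a - √x) h / (β² - x²)²` has the sign of `h`. At `c = (β²/2a)^{2/3}` the terms `2ac` and
`β²/√c` of `h` cancel, so `h(c) = -c√c = -β²/2a < 0`, while `h(1 ∧ β) > 0`; hence the root `x*`
lies in `(c, 1 ∧ β)`, and the mean value theorem with `h' > 2a - 3/2` on `[c, x*]` gives
`x* - c < β² / (2a (2a - 3/2))`.
-/

open Real Set

noncomputable section

-- The functions `h` and `g` of the statement, with `a = √α` and `b = β²`.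
def mlmcH (a b x : ℝ) : ℝ := 2 * a * x - x * √x - b / √x

def mlmcG (a b x : ℝ) : ℝ := (a - √x) ^ 2 / (b - x ^ 2)

variable {a b : ℝ}

lemma hasDerivAt_mlmcH (a b : ℝ) {x : ℝ} (hx : 0 < x) :
    HasDerivAt (mlmcH a b) (2 * a - 3 / 2 * √x + b / (2 * x * √x)) x := by
  have hsx : 0 < √x := sqrt_pos.2 hx
  have hsqrt := hasDerivAt_sqrt hx.ne'
  refine ((((hasDerivAt_id' x).const_mul (2 * a)).sub ((hasDerivAt_id' x).mul hsqrt)).sub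
    ((hasDerivAt_const x b).div hsqrt hsx.ne')).congr_deriv ?_
  have hxx : √x * √x = x := mul_self_sqrt hx.le
  set s := √x
  field_simp
  rw [← hxx]
  ring

lemma hasDerivAt_mlmcG (ha : 1 ≤ a) {β x : ℝ} (hx : x ∈ Ioo 0 (min 1 β)) :
    ∃ k > 0, HasDerivAt (mlmcG a (β ^ 2)) (k * mlmcH a (β ^ 2) x) x := by
  have hx0 := hx.1
  have hsx1 : √x < 1 := by simpa using sqrt_lt_sqrt hx0.le (hx.2.trans_le (min_le_left _ _))
  have hden : 0 < β ^ 2 - x ^ 2 :=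
    sub_pos.2 (pow_lt_pow_left₀ (hx.2.trans_le (min_le_right _ _)) hx0.le two_ne_zero)
  have hsqrt := hasDerivAt_sqrt hx0.ne'
  refine ⟨(a - √x) / (β ^ 2 - x ^ 2) ^ 2, by have := sub_pos.2 (hsx1.trans_le ha); positivity, ?_⟩
  refine ((((hasDerivAt_const x a).fun_sub hsqrt).fun_pow 2).fun_div
    ((hasDerivAt_const x _).fun_sub (hasDerivAt_pow 2 x)) hden.ne').congr_deriv ?_
  have hsx : 0 < √x := sqrt_pos.2 hx0
  have hxx : √x * √x = x := mul_self_sqrt hx0.le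
  simp only [mlmcH]
  set s := √x
  field_simp
  rw [← hxx]
  ring

lemma lt_deriv_mlmcH (hb : 0 < b) {x : ℝ} (hx : x ∈ Ioc 0 1) :
    2 * a - 3 / 2 < deriv (mlmcH a b) x := by
  have hx0 := hx.1
  rw [(hasDerivAt_mlmcH a b hx0).deriv]
  have : √x ≤ 1 := sqrt_le_one.2 hx.2
  have : 0 < b / (2 * x * √x) := by positivity
  linarith

lemma mul_sub_lt_mlmcH_sub (hb : 0 < b) {x y : ℝ} (hx : x ∈ Ioc 0 1) (hy : y ∈ Ioc 0 1)
    (hxy : x < y) : (2 * a - 3 / 2) * (y - x) < mlmcH a b y - mlmcH a b x := by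
  have hdiff : ∀ z ∈ Ioc (0 : ℝ) 1, HasDerivAt (mlmcH a b) _ z :=
    fun z hz => hasDerivAt_mlmcH a b hz.1
  exact (convex_Ioc 0 1).mul_sub_lt_image_sub_of_lt_deriv
    (fun z hz => (hdiff z hz).continuousAt.continuousWithinAt)
    (fun z hz => (hdiff z (interior_subset hz)).differentiableAt.differentiableWithinAt)
    (fun z hz => lt_deriv_mlmcH hb (interior_subset hz)) x hx y hy hxy

lemma strictMonoOn_mlmcH (ha : 3 / 4 ≤ a) (hb : 0 < b) : StrictMonoOn (mlmcH a b) (Ioc 0 1) :=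
  fun _ hx _ hy hxy => sub_pos.1 <|
    (mul_nonneg (by linarith) (sub_nonneg.2 hxy.le)).trans_lt (mul_sub_lt_mlmcH_sub hb hx hy hxy)

lemma rpow_two_thirds_mul_sqrt {t : ℝ} (ht : 0 ≤ t) :
    t ^ ((2 : ℝ) / 3) * √(t ^ ((2 : ℝ) / 3)) = t := by
  rw [sqrt_eq_rpow, ← rpow_mul ht, ← rpow_add' ht (by norm_num)]
  norm_num

lemma mlmcH_rpow_two_thirds (ha : 0 < a) (hb : 0 < b) :
    mlmcH a b ((b / (2 * a)) ^ ((2 : ℝ) / 3)) = -(b / (2 * a)) := by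
  set c := (b / (2 * a)) ^ ((2 : ℝ) / 3)
  have hc : c * √c = b / (2 * a) := rpow_two_thirds_mul_sqrt (by positivity)
  have hsc : 0 < √c := sqrt_pos.2 (by positivity)
  have hb' : b / √c = 2 * a * c := by
    rw [div_eq_iff hsc.ne', mul_assoc, hc]
    field_simp
  rw [mlmcH, hb', hc]
  ring

lemma mlmcH_min_one_pos {β : ℝ} (ha : 1 ≤ a) (hβ : 0 < β) (hβa : β ^ 2 < 2 * a - 1) :
    0 < mlmcH a (β ^ 2) (min 1 β) := by
  rcases le_or_gt 1 β with h1 | h1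
  · rw [min_eq_left h1, mlmcH, sqrt_one]
    linarith
  · have hsβ : 0 < √β := sqrt_pos.2 hβ
    have hsβ1 : √β < 1 := by simpa using sqrt_lt_sqrt hβ.le h1
    have hββ : β ^ 2 / √β = β * √β := by
      rw [div_eq_iff hsβ.ne', mul_assoc, mul_self_sqrt hβ.le]
      ring
    rw [min_eq_right h1.le, mlmcH, hββ]
    nlinarith [mul_pos hβ (sub_pos.2 (hsβ1.trans_le ha))]

lemma sq_div_two_sqrt_rpow_two_thirds {α β : ℝ} (hα : 0 ≤ α) (hβ : 0 ≤ β) :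
    (β ^ 2 / (2 * √α)) ^ ((2 : ℝ) / 3) =
      β ^ ((4 : ℝ) / 3) / (2 ^ ((2 : ℝ) / 3) * α ^ ((1 : ℝ) / 3)) := by
  rw [div_rpow (by positivity) (by positivity), mul_rpow (by norm_num) (sqrt_nonneg α),
    sqrt_eq_rpow, ← rpow_natCast β 2, ← rpow_mul hβ, ← rpow_mul hα]
  norm_num

lemma Ioo_min_one_subset_Ioc (β : ℝ) : Ioo 0 (min 1 β) ⊆ Ioc 0 1 :=
  Ioo_subset_Ioc_self.trans (Ioc_subset_Ioc_right (min_le_left _ _))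

lemma strictAntiOn_mlmcG_Ioc (ha : 1 ≤ a) {β xs : ℝ} (hβ : 0 < β)
    (hxs : xs ∈ Ioo 0 (min 1 β)) (hxs0 : mlmcH a (β ^ 2) xs = 0) :
    StrictAntiOn (mlmcG a (β ^ 2)) (Ioc 0 xs) := by
  have hsub : Ioc 0 xs ⊆ Ioo 0 (min 1 β) := fun x hx => ⟨hx.1, hx.2.trans_lt hxs.2⟩
  refine strictAntiOn_of_deriv_neg (convex_Ioc 0 xs) (fun x hx => ?_) (fun x hx => ?_)
  · obtain ⟨k, -, hd⟩ := hasDerivAt_mlmcG ha (hsub hx)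
    exact hd.continuousAt.continuousWithinAt
  · obtain ⟨k, hk, hd⟩ := hasDerivAt_mlmcG ha (hsub (interior_subset hx))
    rw [interior_Ioc] at hx
    have hneg : mlmcH a (β ^ 2) x < mlmcH a (β ^ 2) xs :=
      strictMonoOn_mlmcH (by linarith) (by positivity)
        (Ioo_min_one_subset_Ioc β (hsub (Ioo_subset_Ioc_self hx)))
        (Ioo_min_one_subset_Ioc β hxs) hx.2
    exact hd.deriv ▸ mul_neg_of_pos_of_neg hk (hxs0 ▸ hneg)

lemma strictMonoOn_mlmcG_Ico (ha : 1 ≤ a) {β xs : ℝ} (hβ : 0 < β)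
    (hxs : xs ∈ Ioo 0 (min 1 β)) (hxs0 : mlmcH a (β ^ 2) xs = 0) :
    StrictMonoOn (mlmcG a (β ^ 2)) (Ico xs (min 1 β)) := by
  have hsub : Ico xs (min 1 β) ⊆ Ioo 0 (min 1 β) := fun x hx => ⟨hxs.1.trans_le hx.1, hx.2⟩
  refine strictMonoOn_of_deriv_pos (convex_Ico _ _) (fun x hx => ?_) (fun x hx => ?_)
  · obtain ⟨k, -, hd⟩ := hasDerivAt_mlmcG ha (hsub hx)
    exact hd.continuousAt.continuousWithinAt
  · obtain ⟨k, hk, hd⟩ := hasDerivAt_mlmcG ha (hsub (interior_subset hx))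
    rw [interior_Ico] at hx
    have hpos : mlmcH a (β ^ 2) xs < mlmcH a (β ^ 2) x :=
      strictMonoOn_mlmcH (by linarith) (by positivity) (Ioo_min_one_subset_Ioc β hxs)
        (Ioo_min_one_subset_Ioc β (hsub (Ioo_subset_Ico_self hx))) hx.1
    exact hd.deriv ▸ mul_pos hk (hxs0 ▸ hpos)

lemma rpow_two_thirds_mem_Ioc (ha : 0 < a) (hb : 0 < b) (hba : b ≤ 2 * a) :
    (b / (2 * a)) ^ ((2 : ℝ) / 3) ∈ Ioc 0 1 :=
  ⟨by positivity, rpow_le_one (by positivity) ((div_le_one (by positivity)).2 hba) (by norm_num)⟩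

lemma exists_mlmcH_eq_zero (ha : 1 ≤ a) {β : ℝ} (hβ : 0 < β) (hβa : β ^ 2 < 2 * a - 1) :
    ∃ xs ∈ Ioo 0 (min 1 β), mlmcH a (β ^ 2) xs = 0 := by
  have hb : 0 < β ^ 2 := by positivity
  have hc := rpow_two_thirds_mem_Ioc (a := a) (by linarith) hb (by linarith)
  have hm : min 1 β ∈ Ioc 0 1 := ⟨lt_min one_pos hβ, min_le_left _ _⟩
  have hhc : mlmcH a (β ^ 2) ((β ^ 2 / (2 * a)) ^ ((2 : ℝ) / 3)) < 0 := by
    rw [mlmcH_rpow_two_thirds (by linarith) hb, neg_neg_iff_pos]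
    positivity
  have hhm := mlmcH_min_one_pos ha hβ hβa
  have hcm := ((strictMonoOn_mlmcH (by linarith) hb).lt_iff_lt hc hm).1 (hhc.trans hhm)
  obtain ⟨xs, hxs, hxs0⟩ := intermediate_value_Ioo hcm.le
    (fun x hx => (hasDerivAt_mlmcH a _ (hc.1.trans_le hx.1)).continuousAt.continuousWithinAt)
    ⟨hhc, hhm⟩
  exact ⟨xs, ⟨hc.1.trans hxs.1, hxs.2⟩, hxs0⟩

lemma mlmcH_eq_zero_bounds (ha : 1 ≤ a) (hb : 0 < b) (hba : b ≤ 2 * a) {xs : ℝ}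
    (hxs : xs ∈ Ioc 0 1) (hxs0 : mlmcH a b xs = 0) :
    (b / (2 * a)) ^ ((2 : ℝ) / 3) < xs ∧
      xs < (b / (2 * a)) ^ ((2 : ℝ) / 3) + b / (2 * a * (2 * a - 3 / 2)) := by
  have hc := rpow_two_thirds_mem_Ioc (a := a) (by linarith) hb hba
  have hhc := mlmcH_rpow_two_thirds (a := a) (by linarith) hb
  have hcx : (b / (2 * a)) ^ ((2 : ℝ) / 3) < xs := by
    refine ((strictMonoOn_mlmcH (a := a) (by linarith) hb).lt_iff_lt hc hxs).1 ?_
    rw [hhc, hxs0, neg_neg_iff_pos]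
    positivity
  have hslope := mul_sub_lt_mlmcH_sub (a := a) hb hc hxs hcx
  rw [hxs0, hhc, zero_sub, neg_neg, ← lt_div_iff₀' (by linarith), div_div] at hslope
  exact ⟨hcx, by linarith⟩

/-- the real-analysis lemma behind the optimization of the MLMC parameters.
For `α > 1` and `0 < β` with `β² < 2√α − 1`, set `h(x) = 2√α x − x^{3/2} − β²/√x` and
`g(x) = (√α − √x)²/(β² − x²)`. Then (i) `h` is strictly increasing on `(0,1]` with derivative
bounded below by `2√α − 3/2 > 0`; (ii) there is a unique root `x* ∈ (0, 1 ∧ β)` of `h`, and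
`g` decreases on `(0, x*]` and increases on `[x*, 1 ∧ β)`; (iii)
`β^{4/3}/(2^{2/3}α^{1/3}) < x* < β^{4/3}/(2^{2/3}α^{1/3}) + β²/(2√α(2√α − 3/2))`. -/
theorem mlmc_cost_optimization_lemma
    (α β : ℝ) (hα : 1 < α) (hβ : 0 < β) (hβα : β ^ 2 < 2 * Real.sqrt α - 1)
    (h g : ℝ → ℝ)
    (hh : h = fun x => 2 * Real.sqrt α * x - x * Real.sqrt x - β ^ 2 / Real.sqrt x)
    (hg : g = fun x => (Real.sqrt α - Real.sqrt x) ^ 2 / (β ^ 2 - x ^ 2)) :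
    -- (i)
    (StrictMonoOn h (Set.Ioc 0 1) ∧
      (∀ x ∈ Set.Ioc (0:ℝ) 1, DifferentiableAt ℝ h x ∧
        2 * Real.sqrt α - 3 / 2 ≤ deriv h x) ∧
      0 < 2 * Real.sqrt α - 3 / 2) ∧
    -- (ii) and (iii)
    ∃ xs : ℝ, xs ∈ Set.Ioo 0 (min 1 β) ∧ h xs = 0 ∧
      (∀ y ∈ Set.Ioo (0:ℝ) (min 1 β), h y = 0 → y = xs) ∧
      StrictAntiOn g (Set.Ioc 0 xs) ∧
      StrictMonoOn g (Set.Ico xs (min 1 β)) ∧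
      β ^ ((4:ℝ)/3) / (2 ^ ((2:ℝ)/3) * α ^ ((1:ℝ)/3)) < xs ∧
      xs < β ^ ((4:ℝ)/3) / (2 ^ ((2:ℝ)/3) * α ^ ((1:ℝ)/3))
            + β ^ 2 / (2 * Real.sqrt α * (2 * Real.sqrt α - 3 / 2)) := by
  replace hh : h = mlmcH √α (β ^ 2) := hh
  replace hg : g = mlmcG √α (β ^ 2) := hg
  subst hh hg
  have hsα : 1 < √α := by simpa using sqrt_lt_sqrt zero_le_one hα
  have hb : 0 < β ^ 2 := by positivity
  have hmono := strictMonoOn_mlmcH (a := √α) (by linarith) hb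
  obtain ⟨xs, hxs, hxs0⟩ := exists_mlmcH_eq_zero hsα.le hβ hβα
  have hxs' := Ioo_min_one_subset_Ioc β hxs
  rw [← sq_div_two_sqrt_rpow_two_thirds (by linarith) hβ.le]
  refine ⟨⟨hmono, fun x hx => ⟨(hasDerivAt_mlmcH _ _ hx.1).differentiableAt,
      (lt_deriv_mlmcH hb hx).le⟩, by linarith⟩,
    xs, hxs, hxs0,
    fun y hy hy0 => hmono.injOn (Ioo_min_one_subset_Ioc β hy) hxs' (hy0.trans hxs0.symm),
    strictAntiOn_mlmcG_Ioc hsα.le hβ hxs hxs0, strictMonoOn_mlmcG_Ico hsα.le hβ hxs hxs0,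
    mlmcH_eq_zero_bounds hsα.le hb (by linarith) hxs' hxs0⟩
end
end

section
/- For all real numbers a, b > 0, one has √((a² + b)/2) ≤ a/2 + √((a/2)² + b/2) ≤ √( ((3 + √3)/4)·(a² + b) ). -/
/-!
With `u = a/2` and `v = √((a/2)² + b/2)` one has `u² + v² = (a² + b)/2`, so both bounds are the
comparison `√(u² + v²) ≤ u + v ≤ √(2(u² + v²))` of the `ℓ²` and `ℓ¹` norms of `(u, v)`. The upper
bound thus holds with `a² + b` in place of `((3 + √3)/4)(a² + b)`, and `1 ≤ (3 + √3)/4`.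
-/

open Real

theorem sqrt_sq_add_sq_le_add {u v : ℝ} (hu : 0 ≤ u) (hv : 0 ≤ v) :
    √(u ^ 2 + v ^ 2) ≤ u + v :=
  (sqrt_le_left (add_nonneg hu hv)).2 (by nlinarith [mul_nonneg hu hv])

theorem add_le_sqrt_two_mul_sq_add_sq (u v : ℝ) : u + v ≤ √(2 * (u ^ 2 + v ^ 2)) :=
  le_sqrt_of_sq_le (by nlinarith [two_mul_le_add_sq u v])

theorem one_le_three_add_sqrt_three_div_four : 1 ≤ (3 + √3) / 4 := by
  linarith [one_le_sqrt.2 (by norm_num : (1 : ℝ) ≤ 3)]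

/-- for all `a, b > 0`,
`√((a² + b)/2) ≤ a/2 + √((a/2)² + b/2) ≤ √(((3 + √3)/4)(a² + b))`. -/
theorem rmse_orlicz_comparison (a b : ℝ) (ha : 0 < a) (hb : 0 < b) :
    Real.sqrt ((a ^ 2 + b) / 2) ≤ a / 2 + Real.sqrt ((a / 2) ^ 2 + b / 2) ∧
    a / 2 + Real.sqrt ((a / 2) ^ 2 + b / 2)
      ≤ Real.sqrt ((3 + Real.sqrt 3) / 4 * (a ^ 2 + b)) := by
  set v := √((a / 2) ^ 2 + b / 2)
  have h_norm_sq : (a / 2) ^ 2 + v ^ 2 = (a ^ 2 + b) / 2 := by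
    rw [sq_sqrt (by positivity)]
    ring
  constructor
  · rw [← h_norm_sq]
    exact sqrt_sq_add_sq_le_add (by positivity) (sqrt_nonneg _)
  · calc a / 2 + v ≤ √(2 * ((a / 2) ^ 2 + v ^ 2)) := add_le_sqrt_two_mul_sq_add_sq _ _
      _ = √(a ^ 2 + b) := by rw [h_norm_sq]; ring_nf
      _ ≤ √((3 + √3) / 4 * (a ^ 2 + b)) :=
        sqrt_le_sqrt (le_mul_of_one_le_left (by positivity) one_le_three_add_sqrt_three_div_four)
end

section
/- Let G be a real centered Gaussian random variable with variance σ² > 0, and let δ ≥ 0. Then: (i) for every ν with 0 ≤ ν < 1/(2σ²), E[ exp( ν(δ + |G|)² ) ] ≤ exp( νδ²/(1 − 2νσ²) )·( 4νδσ/( √(2π)(1 − 2νσ²) ) + 1/√(1 − 2νσ²) ); (ii) for every ν with 0 ≤ ν ≤ 1/(4σ²), E[ exp( ν(δ + |G|)² ) ] ≤ exp( 2ν( δ² + (2/√π)·δσ + σ²·ln 2 ) ). -/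
open MeasureTheory ProbabilityTheory Real
open scoped NNReal

/-!
Completing the square, `φ_σ(x) · exp (ν (δ + |x|)²)` is `exp (ν δ² / D) / √(2π σ²)` times a Gaussian
bump `exp (-(D / 2σ²) (|x| - m)²)` with `D = 1 - 2νσ²` and `m = 2νδσ² / D ≥ 0`. Folding along `|x|`,
the bump integrates to twice its integral over `(0, ∞)`, which after the shift by `m` is at most
`m` (the piece over `(-m, 0]`, where the integrand is `≤ 1`) plus half the full Gaussian integral.
For (ii), `ν ≤ 1/(4σ²)` gives `D ≥ 1/2`, so `1/D ≤ 2` and `1/(√2 D) ≤ 1/√D`; Bernoulli's inequality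
`(1/2)^(2x) ≤ 1 - x` at `x = 2νσ²` yields `1/√D ≤ 2^(2νσ²)`, and `1 + S ≤ exp S` for `S = 4νδσ/√π`.
-/

lemma integral_Ioi_comp_sub_right {E : Type*} [NormedAddCommGroup E] [NormedSpace ℝ E]
    (f : ℝ → E) (a m : ℝ) : ∫ x in Set.Ioi a, f (x - m) = ∫ x in Set.Ioi (a - m), f x := by
  rw [← (measurePreserving_sub_right volume m).setIntegral_preimage_emb
    (measurableEmbedding_subRight m) f, Set.preimage_sub_const_Ioi, sub_add_cancel]

lemma integral_Ioi_exp_neg_mul_sub_sq_le {a : ℝ} (ha : 0 < a) {m : ℝ} (hm : 0 ≤ m) :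
    ∫ x in Set.Ioi 0, exp (-a * (x - m) ^ 2) ≤ m + √(π / a) / 2 := by
  have hint : Integrable fun x : ℝ => exp (-a * x ^ 2) := integrable_exp_neg_mul_sq ha
  have hle_one : ∫ x in (-m)..0, exp (-a * x ^ 2) ≤ m := by
    calc _ ≤ ∫ _ in (-m)..0, (1 : ℝ) :=
          intervalIntegral.integral_mono_on (by linarith) hint.intervalIntegrable
            intervalIntegrable_const fun x _ => exp_le_one_iff.mpr (by nlinarith [sq_nonneg x])
      _ = m := by simp
  rw [integral_Ioi_comp_sub_right (fun x => exp (-a * x ^ 2)), zero_sub,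
    ← intervalIntegral.integral_interval_add_Ioi hint.integrableOn hint.integrableOn,
    integral_gaussian_Ioi]
  linarith

lemma integrable_exp_neg_mul_abs_sub_sq {a : ℝ} (ha : 0 < a) (m : ℝ) :
    Integrable fun x : ℝ => exp (-a * (|x| - m) ^ 2) := by
  refine ((integrable_exp_neg_mul_sq (half_pos ha)).const_mul (exp (a * m ^ 2))).mono'
    (by fun_prop) (ae_of_all _ fun x => ?_)
  rw [norm_of_nonneg (exp_pos _).le, ← exp_add, exp_le_exp]
  nlinarith [sq_nonneg (|x| - 2 * m), sq_abs x]

lemma integral_exp_neg_mul_abs_sub_sq_le {a : ℝ} (ha : 0 < a) {m : ℝ} (hm : 0 ≤ m) :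
    ∫ x, exp (-a * (|x| - m) ^ 2) ≤ 2 * m + √(π / a) := by
  rw [integral_comp_abs (f := fun x => exp (-a * (x - m) ^ 2))]
  linarith [integral_Ioi_exp_neg_mul_sub_sq_le ha hm]

lemma gaussianPDFReal_mul_exp_sq_add_abs {σ ν : ℝ} (hσ : σ ≠ 0) (hD : 1 - 2 * ν * σ ^ 2 ≠ 0)
    (δ x : ℝ) :
    gaussianPDFReal 0 (σ ^ 2).toNNReal x * exp (ν * (δ + |x|) ^ 2)
      = (√(2 * π * σ ^ 2))⁻¹ * exp (ν * δ ^ 2 / (1 - 2 * ν * σ ^ 2)) *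
        exp (-((1 - 2 * ν * σ ^ 2) / (2 * σ ^ 2)) *
          (|x| - 2 * ν * δ * σ ^ 2 / (1 - 2 * ν * σ ^ 2)) ^ 2) := by
  rw [gaussianPDFReal, Real.coe_toNNReal _ (sq_nonneg σ), sub_zero, ← sq_abs x]
  simp only [mul_assoc, ← exp_add]
  congr 2
  have hD' : 1 - 2 * σ ^ 2 * ν ≠ 0 := by rwa [mul_right_comm]
  field_simp
  ring

/-- The right-hand side of part (i). -/
noncomputable def absShiftBound (σ δ ν : ℝ) : ℝ :=
  exp (ν * δ ^ 2 / (1 - 2 * ν * σ ^ 2)) *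
    (4 * ν * δ * σ / (√(2 * π) * (1 - 2 * ν * σ ^ 2)) + 1 / √(1 - 2 * ν * σ ^ 2))

lemma integral_gaussianPDFReal_mul_exp_sq_add_abs_le {σ ν δ : ℝ} (hσ : 0 < σ) (hν : 0 ≤ ν)
    (hδ : 0 ≤ δ) (hD : 0 < 1 - 2 * ν * σ ^ 2) :
    ∫ x, gaussianPDFReal 0 (σ ^ 2).toNNReal x * exp (ν * (δ + |x|) ^ 2)
      ≤ absShiftBound σ δ ν := by
  simp_rw [gaussianPDFReal_mul_exp_sq_add_abs hσ.ne' hD.ne']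
  rw [integral_const_mul, absShiftBound]
  set D := 1 - 2 * ν * σ ^ 2
  have hσπ : √(2 * π * σ ^ 2) = √(2 * π) * σ := by
    rw [sqrt_mul' _ (sq_nonneg σ), sqrt_sq hσ.le]
  have hπa : √(π / (D / (2 * σ ^ 2))) = √(2 * π) * σ / √D := by
    rw [← hσπ, ← sqrt_div' _ hD.le]
    congr 1
    field_simp
  calc _ ≤ (√(2 * π * σ ^ 2))⁻¹ * exp (ν * δ ^ 2 / D) *
        (2 * (2 * ν * δ * σ ^ 2 / D) + √(π / (D / (2 * σ ^ 2)))) := by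
        gcongr
        exact integral_exp_neg_mul_abs_sub_sq_le (by positivity) (by positivity)
    _ = _ := by
        rw [hσπ, hπa]
        field_simp
        ring

lemma lintegral_ofReal_comp_eq_integral_gaussianPDFReal {Ω : Type*} [MeasurableSpace Ω]
    {P : Measure Ω} {X : Ω → ℝ} {μ : ℝ} {v : ℝ≥0} (hv : v ≠ 0)
    (hX : HasLaw X (gaussianReal μ v) P) {f : ℝ → ℝ} (hf : Measurable f) (hf0 : ∀ x, 0 ≤ f x)
    (hfi : Integrable fun x => gaussianPDFReal μ v x * f x) :
    ∫⁻ ω, ENNReal.ofReal (f (X ω)) ∂P = ENNReal.ofReal (∫ x, gaussianPDFReal μ v x * f x) := by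
  rw [hX.lintegral_comp hf.ennreal_ofReal.aemeasurable, gaussianReal_of_var_ne_zero μ hv,
    lintegral_withDensity_eq_lintegral_mul _ (measurable_gaussianPDF μ v) hf.ennreal_ofReal,
    ofReal_integral_eq_lintegral_ofReal hfi
      (ae_of_all _ fun x => mul_nonneg (gaussianPDFReal_nonneg μ v x) (hf0 x))]
  congr 1 with x
  simp [gaussianPDF, ENNReal.ofReal_mul (gaussianPDFReal_nonneg μ v x)]

lemma lintegral_ofReal_exp_sq_add_abs_le_absShiftBound {Ω : Type*} [MeasurableSpace Ω]
    {P : Measure Ω} {X : Ω → ℝ} {σ ν δ : ℝ} (hσ : 0 < σ)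
    (hX : HasLaw X (gaussianReal 0 (σ ^ 2).toNNReal) P) (hν : 0 ≤ ν) (hδ : 0 ≤ δ)
    (hD : 0 < 1 - 2 * ν * σ ^ 2) :
    ∫⁻ ω, ENNReal.ofReal (exp (ν * (δ + |X ω|) ^ 2)) ∂P ≤ ENNReal.ofReal (absShiftBound σ δ ν) := by
  have hintegrable :
      Integrable fun x => gaussianPDFReal 0 (σ ^ 2).toNNReal x * exp (ν * (δ + |x|) ^ 2) := by
    simp_rw [gaussianPDFReal_mul_exp_sq_add_abs hσ.ne' hD.ne']
    exact (integrable_exp_neg_mul_abs_sub_sq (by positivity) _).const_mul _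
  rw [lintegral_ofReal_comp_eq_integral_gaussianPDFReal (by simpa using hσ.ne') hX
    (f := fun x => exp (ν * (δ + |x|) ^ 2)) (by fun_prop) (fun _ => (exp_pos _).le) hintegrable]
  exact ENNReal.ofReal_le_ofReal (integral_gaussianPDFReal_mul_exp_sq_add_abs_le hσ hν hδ hD)

lemma exp_neg_two_mul_log_two_le_one_sub {x : ℝ} (h0 : 0 ≤ x) (h1 : x ≤ 1 / 2) :
    exp (-(2 * x * log 2)) ≤ 1 - x := by
  have h := rpow_one_add_le_one_add_mul_self (s := -1 / 2) (by norm_num) (p := 2 * x)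
    (by linarith) (by linarith)
  rw [rpow_def_of_pos (by norm_num), show (1 : ℝ) + -1 / 2 = 2⁻¹ by norm_num, log_inv] at h
  convert h using 2 <;> ring

lemma one_div_sqrt_one_sub_le_exp_mul_log_two {x : ℝ} (h0 : 0 ≤ x) (h1 : x ≤ 1 / 2) :
    1 / √(1 - x) ≤ exp (x * log 2) := by
  rw [one_div, ← sqrt_inv, show x * log 2 = 2 * x * log 2 / 2 by ring, exp_half]
  gcongr
  rw [inv_le_comm₀ (by linarith) (exp_pos _), ← exp_neg]
  exact exp_neg_two_mul_log_two_le_one_sub h0 h1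

lemma absShiftBound_le_exp {σ ν δ : ℝ} (hσ : 0 < σ) (hν : 0 ≤ ν) (hδ : 0 ≤ δ)
    (hνσ : ν ≤ 1 / (4 * σ ^ 2)) :
    absShiftBound σ δ ν ≤ exp (2 * ν * (δ ^ 2 + 2 / √π * δ * σ + σ ^ 2 * log 2)) := by
  rw [absShiftBound]
  set x := 2 * ν * σ ^ 2 with hx
  have hx0 : 0 ≤ x := by positivity
  have hx1 : x ≤ 1 / 2 := by
    rw [le_div_iff₀ (by positivity)] at hνσ
    linarith
  have hD : 0 < 1 - x := by linarith
  set S := 4 * ν * δ * σ / √π with hS_def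
  have hK : ν * δ ^ 2 / (1 - x) ≤ 2 * ν * δ ^ 2 := by
    rw [div_le_iff₀ hD]
    nlinarith [mul_nonneg hν (sq_nonneg δ)]
  have hfirst : 4 * ν * δ * σ / (√(2 * π) * (1 - x)) ≤ S * (1 / √(1 - x)) := by
    have h : √(1 - x) ≤ √2 * (1 - x) :=
      calc √(1 - x) ≤ √(2 * (1 - x) ^ 2) := sqrt_le_sqrt (by nlinarith)
        _ = √2 * (1 - x) := by rw [sqrt_mul zero_le_two, sqrt_sq hD.le]
    calc _ = S * (1 / (√2 * (1 - x))) := by rw [sqrt_mul zero_le_two, hS_def]; field_simp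
      _ ≤ S * (1 / √(1 - x)) := by gcongr
  have hB := one_div_sqrt_one_sub_le_exp_mul_log_two hx0 hx1
  calc _ ≤ exp (2 * ν * δ ^ 2) * ((S + 1) * exp (x * log 2)) := by
        gcongr
        have hS : 0 ≤ S := by positivity
        linarith [mul_le_mul_of_nonneg_left hB hS]
    _ ≤ exp (2 * ν * δ ^ 2) * (exp S * exp (x * log 2)) := by
        gcongr
        exact add_one_le_exp S
    _ = _ := by
        rw [← exp_add, ← exp_add, hS_def, hx]
        ring_nf

theorem gaussian_abs_shift_mgf_general
    {Ω : Type*} [MeasureSpace Ω]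
    (σ : ℝ) (hσ : 0 < σ) (G : Ω → ℝ)
    (hG : Measure.map G (ℙ : Measure Ω) = gaussianReal 0 (Real.toNNReal (σ ^ 2)))
    (δ : ℝ) (hδ : 0 ≤ δ) :
    (∀ ν : ℝ, 0 ≤ ν → ν < 1 / (2 * σ ^ 2) →
      ∫⁻ ω, ENNReal.ofReal (Real.exp (ν * (δ + |G ω|) ^ 2)) ∂(ℙ : Measure Ω)
        ≤ ENNReal.ofReal
            (Real.exp (ν * δ ^ 2 / (1 - 2 * ν * σ ^ 2)) *
              (4 * ν * δ * σ / (Real.sqrt (2 * π) * (1 - 2 * ν * σ ^ 2))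
                + 1 / Real.sqrt (1 - 2 * ν * σ ^ 2)))) ∧
    (∀ ν : ℝ, 0 ≤ ν → ν ≤ 1 / (4 * σ ^ 2) →
      ∫⁻ ω, ENNReal.ofReal (Real.exp (ν * (δ + |G ω|) ^ 2)) ∂(ℙ : Measure Ω)
        ≤ ENNReal.ofReal
            (Real.exp (2 * ν * (δ ^ 2 + 2 / Real.sqrt π * δ * σ + σ ^ 2 * Real.log 2)))) := by
  have hlaw : HasLaw G (gaussianReal 0 (σ ^ 2).toNNReal) ℙ :=
    ⟨.of_map_ne_zero (hG ▸ IsProbabilityMeasure.ne_zero _), hG⟩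
  have part_one (ν : ℝ) (hν : 0 ≤ ν) (hνσ : ν < 1 / (2 * σ ^ 2)) :
      ∫⁻ ω, ENNReal.ofReal (exp (ν * (δ + |G ω|) ^ 2)) ≤ ENNReal.ofReal (absShiftBound σ δ ν) := by
    refine lintegral_ofReal_exp_sq_add_abs_le_absShiftBound hσ hlaw hν hδ ?_
    rw [lt_div_iff₀ (by positivity)] at hνσ
    linarith
  refine ⟨part_one, fun ν hν hνσ => ?_⟩
  have hνσ' : ν < 1 / (2 * σ ^ 2) := hνσ.trans_lt (by gcongr; linarith)
  exact (part_one ν hν hνσ').trans (ENNReal.ofReal_le_ofReal (absShiftBound_le_exp hσ hν hδ hνσ))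

/-- Lemma A.1, core Gaussian computation: for `G ∼ N(0,σ²)` with `σ > 0`
and `δ ≥ 0`, (i) for `0 ≤ ν < 1/(2σ²)`,
`E[exp(ν(δ+|G|)²)] ≤ exp(νδ²/(1−2νσ²))·(4νδσ/(√(2π)(1−2νσ²)) + 1/√(1−2νσ²))`;
(ii) for `0 ≤ ν ≤ 1/(4σ²)`, `E[exp(ν(δ+|G|)²)] ≤ exp(2ν(δ² + (2/√π)δσ + σ² ln 2))`. -/
theorem gaussian_abs_shift_mgf
    {Ω : Type*} [MeasureSpace Ω] [IsProbabilityMeasure (ℙ : Measure Ω)]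
    (σ : ℝ) (hσ : 0 < σ) (G : Ω → ℝ)
    (hG : Measure.map G (ℙ : Measure Ω) = gaussianReal 0 (Real.toNNReal (σ ^ 2)))
    (δ : ℝ) (hδ : 0 ≤ δ) :
    (∀ ν : ℝ, 0 ≤ ν → ν < 1 / (2 * σ ^ 2) →
      ∫⁻ ω, ENNReal.ofReal (Real.exp (ν * (δ + |G ω|) ^ 2)) ∂(ℙ : Measure Ω)
        ≤ ENNReal.ofReal
            (Real.exp (ν * δ ^ 2 / (1 - 2 * ν * σ ^ 2)) *
              (4 * ν * δ * σ / (Real.sqrt (2 * π) * (1 - 2 * ν * σ ^ 2))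
                + 1 / Real.sqrt (1 - 2 * ν * σ ^ 2)))) ∧
    (∀ ν : ℝ, 0 ≤ ν → ν ≤ 1 / (4 * σ ^ 2) →
      ∫⁻ ω, ENNReal.ofReal (Real.exp (ν * (δ + |G ω|) ^ 2)) ∂(ℙ : Measure Ω)
        ≤ ENNReal.ofReal
            (Real.exp (2 * ν * (δ ^ 2 + 2 / Real.sqrt π * δ * σ + σ ^ 2 * Real.log 2)))) :=
  gaussian_abs_shift_mgf_general σ hσ G hG δ hδ
end
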